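/- arXiv:1806.08533 — 3 statements merged into one kernel-verified Lean document; each statement's English description precedes it below -/
import Mathlib

section
/- Propagation of Lipschitz regularity (Proposition 3.6.c): Under the standing assumptions and the solution hypotheses, if in addition Φ is globally Lipschitz with constant L>0 (i.e. |Φ(x)−Φ(x')|≤L|x−x'| for all x,x'∈ℝ), then |u(t,x)−u(t,x')| ≤ L|x−x'| for all t∈[0,T] and x,x'∈ℝ. -/
/-!
Along the solution, `F̄(t,x,∂²ₓu) = a(t,x) ∂²ₓu` with `0 ≤ a ≤ C`, by the mean value theorem in
`z` (`F̄(t,x,0) = 0`, and `∂_zF̄ ∈ (0,C]` on the segment from `0` to `∂²ₓu`, which stays in `D_ε`).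
So `u` solves the linear backward equation `∂ₜu + a ∂²ₓu = 0`, and `|∂ₜu| ≤ C K'`.

For such equations Lipschitz bounds propagate backwards by doubling the variables. If
`u(t₀,x₀) - u(t₀,y₀) - L (x₀ - y₀) > 0` with `y₀ ≤ x₀`, maximise
`u(t,x) - u(t,y) - L (x - y) - δ ((x - x₀)² + (y - y₀)²) + K t` over `t₀ ≤ t ≤ τ`, `y ≤ x`.
The maximum is attained because `u(t,x) - u(t,y) - L (x - y) ≤ 2 C K' (T - t)`. It can lie neither
on the diagonal nor, for `τ` close to `T` and `K` small, at `t = τ`. At any other maximum the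
second-derivative tests give `∂²ₓu(x) ≤ 2δ` and `∂²ₓu(y) ≥ -2δ`, so the right time derivative
`-a ∂²ₓu(x) + a ∂²ₓu(y) + K ≥ K - 4Cδ` is positive: a contradiction once `K > 4Cδ`.
Applying the one-sided bound to `u` and `-u` gives the two-sided one.
-/

open Set Filter

noncomputable section

/-- Second derivative in the space variable of a function of `(t, x)`. -/
def d2x (u : ℝ → ℝ → ℝ) (t x : ℝ) : ℝ := iteratedDeriv 2 (fun y => u t y) x

/-- Data of the abstract market impact model of Section 2. -/
structure Standing where
  /-- the time horizon -/
  T : ℝ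
  T_pos : 0 < T
  /-- the threshold `ε₀` -/
  eps0 : ℝ
  eps0_mem : eps0 ∈ Set.Ioc (0 : ℝ) 1
  /-- the `ℝ ∪ {+∞}`-valued cost function `F` -/
  F : ℝ → ℝ → ℝ → EReal
  /-- the nonlinearity `F̄`, real-valued on the domain `D` -/
  Fbar : ℝ → ℝ → ℝ → ℝ
  /-- the gamma constraint `γ̄`, possibly `+∞` -/
  gammaBar : ℝ → ℝ → EReal
  L0 : ℝ
  M : ℝ
  L0_pos : 0 < L0
  M_pos : 0 < M
  /-- `∂ₜ F̄` -/
  FbarT : ℝ → ℝ → ℝ → ℝ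
  /-- `∂ₓ F̄` -/
  FbarX : ℝ → ℝ → ℝ → ℝ
  /-- `∂_z F̄` -/
  FbarZ : ℝ → ℝ → ℝ → ℝ

namespace Standing

/-- The domain `D = {F < ∞}`. -/
def D (S : Standing) : Set (ℝ × ℝ × ℝ) :=
  {p | p.1 ∈ Set.Icc 0 S.T ∧ S.F p.1 p.2.1 p.2.2 < ⊤}

/-- The set `D_ε = {F ≤ 1/ε}`. -/
def Deps (S : Standing) (ε : ℝ) : Set (ℝ × ℝ × ℝ) :=
  {p | p.1 ∈ Set.Icc 0 S.T ∧ S.F p.1 p.2.1 p.2.2 ≤ ((1 / ε : ℝ) : EReal)}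

/-- The set `D_{ε,k}`. -/
def DepsK (S : Standing) (ε k : ℝ) : Set (ℝ × ℝ × ℝ) :=
  S.Deps ε ∩ {p | |p.2.2| ≤ k}

/-- The standing assumptions on the abstract model. -/
structure Hyp (S : Standing) : Prop where
  /-- `F` is continuous (with values in `ℝ ∪ {+∞}`). -/
  F_cont : Continuous fun p : ℝ × ℝ × ℝ => S.F p.1 p.2.1 p.2.2
  /-- the domain of `F` is `{z < γ̄(t,x)}`. -/
  domain_eq : ∀ p : ℝ × ℝ × ℝ, p.1 ∈ Set.Icc 0 S.T →
      (S.F p.1 p.2.1 p.2.2 < ⊤ ↔ ((p.2.2 : ℝ) : EReal) < S.gammaBar p.1 p.2.1)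
  /-- `γ̄` is either identically `+∞` or real-valued and uniformly continuous. -/
  gamma_cases :
      (∀ t x, S.gammaBar t x = ⊤) ∨
      (∃ g : ℝ → ℝ → ℝ, (∀ t x, S.gammaBar t x = ((g t x : ℝ) : EReal)) ∧
        UniformContinuousOn (fun p : ℝ × ℝ => g p.1 p.2) (Set.Icc 0 S.T ×ˢ Set.univ))
  /-- `F̄` is continuous on `D`. -/
  Fbar_cont : ContinuousOn (fun p : ℝ × ℝ × ℝ => S.Fbar p.1 p.2.1 p.2.2) S.D
  /-- (R1) `F̄` is `C¹` on `D`: existence of the partial derivatives. -/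
  Fbar_dT : ∀ p ∈ S.D,
      HasDerivWithinAt (fun s => S.Fbar s p.2.1 p.2.2) (S.FbarT p.1 p.2.1 p.2.2)
        (Set.Icc 0 S.T) p.1
  Fbar_dX : ∀ p ∈ S.D,
      HasDerivAt (fun y => S.Fbar p.1 y p.2.2) (S.FbarX p.1 p.2.1 p.2.2) p.2.1
  Fbar_dZ : ∀ p ∈ S.D,
      HasDerivAt (fun w => S.Fbar p.1 p.2.1 w) (S.FbarZ p.1 p.2.1 p.2.2) p.2.2
  /-- (R1) continuity of the partial derivatives on `D`. -/
  FbarT_cont : ContinuousOn (fun p : ℝ × ℝ × ℝ => S.FbarT p.1 p.2.1 p.2.2) S.D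
  FbarX_cont : ContinuousOn (fun p : ℝ × ℝ × ℝ => S.FbarX p.1 p.2.1 p.2.2) S.D
  FbarZ_cont : ContinuousOn (fun p : ℝ × ℝ × ℝ => S.FbarZ p.1 p.2.1 p.2.2) S.D
  /-- (R1) partial derivatives of order `1` in `t`, up to `3` in `x` and in `z`,
  are bounded on `D_{ε,1/ε}`. -/
  derivs_bdd : ∀ ε ∈ Set.Ioc (0 : ℝ) S.eps0, ∃ C : ℝ,
      ∀ p ∈ S.DepsK ε (1 / ε), ∀ n : ℕ, 1 ≤ n → n ≤ 3 →
        |iteratedDeriv n (fun y => S.Fbar p.1 y p.2.2) p.2.1| ≤ C ∧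
        |iteratedDeriv n (fun w => S.Fbar p.1 p.2.1 w) p.2.2| ≤ C ∧
        |S.FbarT p.1 p.2.1 p.2.2| ≤ C
  /-- (R1) `F̄` is uniformly continuous on `D_ε`. -/
  Fbar_unifCont : ∀ ε ∈ Set.Ioc (0 : ℝ) S.eps0,
      UniformContinuousOn (fun p : ℝ × ℝ × ℝ => S.Fbar p.1 p.2.1 p.2.2) (S.Deps ε)
  /-- (R2) `F(t,x,0) = 0` and `F̄(t,x,0) = 0`. -/
  F_zero : ∀ t ∈ Set.Icc (0 : ℝ) S.T, ∀ x : ℝ, S.F t x 0 = 0 ∧ S.Fbar t x 0 = 0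
  /-- (R3) `|∂ₜF̄| ≤ L₀ |F̄|` on `D`. -/
  FbarT_bdd : ∀ p ∈ S.D,
      |S.FbarT p.1 p.2.1 p.2.2| ≤ S.L0 * |S.Fbar p.1 p.2.1 p.2.2|
  /-- (R3) `|∂²ₓF̄(t,x,z)| ≤ M |z|` on `D`. -/
  Fbarxx_bdd : ∀ p ∈ S.D,
      |iteratedDeriv 2 (fun y => S.Fbar p.1 y p.2.2) p.2.1| ≤ S.M * |p.2.2|
  /-- (R4) `∂_z F̄ > 0` on `D_ε`. -/
  FbarZ_pos : ∀ ε ∈ Set.Ioc (0 : ℝ) S.eps0, ∀ p ∈ S.Deps ε,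
      0 < S.FbarZ p.1 p.2.1 p.2.2
  /-- (R4) `∂_z F̄` and `1/∂_z F̄` are bounded on `D_{ε,1/ε}`. -/
  FbarZ_bdd : ∀ ε ∈ Set.Ioc (0 : ℝ) S.eps0, ∃ C > (0 : ℝ),
      ∀ p ∈ S.DepsK ε (1 / ε),
        S.FbarZ p.1 p.2.1 p.2.2 ≤ C ∧ 1 / C ≤ S.FbarZ p.1 p.2.1 p.2.2
  /-- (R5) `F` is uniformly continuous on `D_ε`. -/
  F_unifCont : ∀ ε ∈ Set.Ioc (0 : ℝ) S.eps0,
      UniformContinuousOn (fun p : ℝ × ℝ × ℝ => (S.F p.1 p.2.1 p.2.2).toReal) (S.Deps ε)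
  /-- (R5) `D_ε = {z ≤ γ̄_ε(t,x)}` for a continuous `γ̄_ε`. -/
  Deps_eq : ∀ ε ∈ Set.Ioc (0 : ℝ) S.eps0, ∃ γε : ℝ → ℝ → ℝ,
      Continuous (fun p : ℝ × ℝ => γε p.1 p.2) ∧
      S.Deps ε = {p : ℝ × ℝ × ℝ | p.1 ∈ Set.Icc 0 S.T ∧ p.2.2 ≤ γε p.1 p.2.1}

/-- The solution hypotheses of Proposition 3.6: `Φ` is a `C²` terminal condition with
`|Φ''| ≤ K_Φ` and `(T,·,Φ'') ∈ D_{ε_Φ}`, and `u` is a classical `C^{1,4}` solution of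
`∂ₜu + F̄(·,∂²ₓu) = 0` on `[0,T) × ℝ` with `u(T,·) = Φ`, `|∂²ₓu| ≤ K'` and
`(·,∂²ₓu) ∈ D_{ε'}`. -/
structure SolHyp (S : Standing) (KΦ εΦ : ℝ) (Φ : ℝ → ℝ) (K' ε' : ℝ)
    (u : ℝ → ℝ → ℝ) : Prop where
  KPhi_pos : 0 < KΦ
  epsPhi_mem : εΦ ∈ Set.Ioc (0 : ℝ) S.eps0
  Phi_C2 : ContDiff ℝ 2 Φ
  Phi_xx_bdd : ∀ x, |iteratedDeriv 2 Φ x| ≤ KΦ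
  Phi_dom : ∀ x, (S.T, x, iteratedDeriv 2 Φ x) ∈ S.Deps εΦ
  K'_pos : 0 < K'
  eps'_mem : ε' ∈ Set.Ioc (0 : ℝ) S.eps0
  u_cont : ContinuousOn (fun p : ℝ × ℝ => u p.1 p.2) (Set.Icc 0 S.T ×ˢ Set.univ)
  u_C4x : ∀ t ∈ Set.Ico (0 : ℝ) S.T, ContDiff ℝ 4 fun y => u t y
  u_derivs_cont : ∀ n : ℕ, n ≤ 4 → ContinuousOn
      (fun p : ℝ × ℝ => iteratedDeriv n (fun y => u p.1 y) p.2)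
      (Set.Ico 0 S.T ×ˢ Set.univ)
  u_C2x_T : ContDiff ℝ 2 fun y => u S.T y
  u_derivs2_cont : ∀ n : ℕ, n ≤ 2 → ContinuousOn
      (fun p : ℝ × ℝ => iteratedDeriv n (fun y => u p.1 y) p.2)
      (Set.Icc 0 S.T ×ˢ Set.univ)
  uxx_bdd : ∀ t ∈ Set.Icc (0 : ℝ) S.T, ∀ x, |d2x u t x| ≤ K'
  u_dom : ∀ t ∈ Set.Icc (0 : ℝ) S.T, ∀ x, (t, x, d2x u t x) ∈ S.Deps ε'
  pde : ∀ t ∈ Set.Ico (0 : ℝ) S.T, ∀ x,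
      HasDerivWithinAt (fun s => u s x) (-(S.Fbar t x (d2x u t x))) (Set.Ico 0 S.T) t
  terminal : ∀ x, u S.T x = Φ x

end Standing

open Topology

theorem IsLocalMax.deriv_deriv_nonpos {f : ℝ → ℝ} {a : ℝ} (h : IsLocalMax f a)
    (hc : ContinuousAt f a) : deriv (deriv f) a ≤ 0 := by
  by_contra! hpos
  -- a positive second derivative would also make `a` a local minimum, so `f` is locally constant
  have hconst : f =ᶠ[𝓝 a] fun _ => f a :=
    (h.and (isLocalMin_of_deriv_deriv_pos hpos h.deriv_eq_zero hc)).mono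
      fun x hx => le_antisymm hx.1 hx.2
  simp [hconst.deriv.deriv_eq] at hpos

theorem iteratedDeriv_two_le_of_isLocalMax_sub {f g : ℝ → ℝ} {a : ℝ}
    (hf : ContDiffAt ℝ 2 f a) (hg : ContDiffAt ℝ 2 g a) (h : IsLocalMax (f - g) a) :
    iteratedDeriv 2 f a ≤ iteratedDeriv 2 g a := by
  have hfg : iteratedDeriv 2 (f - g) a ≤ 0 := by
    rw [iteratedDeriv_succ, iteratedDeriv_one]
    exact h.deriv_deriv_nonpos (hf.continuousAt.sub hg.continuousAt)
  rw [iteratedDeriv_sub hf hg] at hfg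
  linarith

theorem iteratedDeriv_two_affine_add_sq (α δ x₀ a : ℝ) :
    iteratedDeriv 2 (fun x => α * x + δ * (x - x₀) ^ 2) a = 2 * δ := by
  have h1 (x : ℝ) :
      HasDerivAt (fun x => α * x + δ * (x - x₀) ^ 2) (α + 2 * δ * (x - x₀)) x :=
    (((hasDerivAt_id x).const_mul α).add
      ((((hasDerivAt_id x).sub_const x₀).pow 2).const_mul δ)).congr_deriv (by simp; ring)
  have h2 : HasDerivAt (fun x => α + 2 * δ * (x - x₀)) (2 * δ) a :=
    ((((hasDerivAt_id a).sub_const x₀).const_mul (2 * δ)).const_add α).congr_deriv (by simp)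
  rw [iteratedDeriv_succ, iteratedDeriv_one, funext fun x => (h1 x).deriv, h2.deriv]

theorem iteratedDeriv_two_le_of_isLocalMax_sub_sq {f : ℝ → ℝ} {a α δ x₀ : ℝ}
    (hf : ContDiffAt ℝ 2 f a)
    (h : IsLocalMax (fun x => f x - (α * x + δ * (x - x₀) ^ 2)) a) :
    iteratedDeriv 2 f a ≤ 2 * δ :=
  iteratedDeriv_two_affine_add_sq α δ x₀ a ▸
    iteratedDeriv_two_le_of_isLocalMax_sub hf (by fun_prop) h

theorem IsMaxOn.nonpos_of_hasDerivWithinAt_Icc {f : ℝ → ℝ} {f' a b : ℝ} (hab : a < b)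
    (hmax : IsMaxOn f (Icc a b) a) (hf : HasDerivWithinAt f f' (Icc a b) a) : f' ≤ 0 := by
  have := hmax.localize.hasFDerivWithinAt_nonpos hf.hasFDerivWithinAt
    (sub_mem_posTangentConeAt_of_segment_subset (segment_eq_Icc hab.le).subset)
  simp only [ContinuousLinearMap.toSpanSingleton_apply, smul_eq_mul] at this
  exact nonpos_of_mul_nonpos_right this (sub_pos.2 hab)

theorem exists_mem_Icc_eq_mul_of_hasDerivAt {f f' : ℝ → ℝ} {z C : ℝ} (hf0 : f 0 = 0)
    (hf : ∀ w ∈ uIcc 0 z, HasDerivAt f (f' w) w) (hf' : ∀ w ∈ uIcc 0 z, f' w ∈ Icc 0 C) :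
    ∃ c ∈ Icc 0 C, f z = c * z := by
  have hcont : ContinuousOn f (uIcc 0 z) := fun w hw =>
    (hf w hw).continuousAt.continuousWithinAt
  rcases lt_trichotomy z 0 with hz | rfl | hz
  · rw [uIcc_of_ge hz.le] at hf hf' hcont
    obtain ⟨ξ, hξ, hξeq⟩ := exists_hasDerivAt_eq_slope f f' hz hcont
      fun w hw => hf w (Ioo_subset_Icc_self hw)
    refine ⟨f' ξ, hf' ξ (Ioo_subset_Icc_self hξ), ?_⟩
    rw [hξeq, hf0]
    field_simp
    ring
  · exact ⟨f' 0, hf' 0 (by simp), by simp [hf0]⟩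
  · rw [uIcc_of_le hz.le] at hf hf' hcont
    obtain ⟨ξ, hξ, hξeq⟩ := exists_hasDerivAt_eq_slope f f' hz hcont
      fun w hw => hf w (Ioo_subset_Icc_self hw)
    refine ⟨f' ξ, hf' ξ (Ioo_subset_Icc_self hξ), ?_⟩
    rw [hξeq, hf0]
    field_simp
    ring

structure SolvesBackwardDiffusion (T C : ℝ) (a u : ℝ → ℝ → ℝ) : Prop where
  continuousOn : ContinuousOn (fun p : ℝ × ℝ => u p.1 p.2) (Icc 0 T ×ˢ univ)
  contDiff : ∀ t ∈ Ico 0 T, ContDiff ℝ 2 (u t)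
  hasDerivWithinAt : ∀ t ∈ Ico 0 T, ∀ x,
    HasDerivWithinAt (fun s => u s x) (-(a t x * iteratedDeriv 2 (u t) x)) (Ico 0 T) t
  coeff_mem : ∀ t ∈ Ico 0 T, ∀ x, a t x ∈ Icc 0 C

namespace SolvesBackwardDiffusion

variable {T C : ℝ} {a u : ℝ → ℝ → ℝ}

theorem neg (h : SolvesBackwardDiffusion T C a u) :
    SolvesBackwardDiffusion T C a fun t x => -u t x where
  continuousOn := h.continuousOn.neg
  contDiff t ht := (h.contDiff t ht).neg
  hasDerivWithinAt t ht x := by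
    simpa [iteratedDeriv_fun_neg] using (h.hasDerivWithinAt t ht x).fun_neg
  coeff_mem := h.coeff_mem

theorem abs_sub_terminal_le (h : SolvesBackwardDiffusion T C a u) {K : ℝ}
    (hK : ∀ t ∈ Ico 0 T, ∀ x, |iteratedDeriv 2 (u t) x| ≤ K) :
    ∀ t ∈ Icc 0 T, ∀ x, |u t x - u T x| ≤ C * K * (T - t) := by
  intro t ht x
  have hIco : ∀ s ∈ Ico t T, s ∈ Ico 0 T := fun s hs => ⟨ht.1.trans hs.1, hs.2⟩
  have hcont : ContinuousOn (fun s => u s x) (Icc t T) :=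
    h.continuousOn.comp (f := fun s => (s, x)) (by fun_prop)
      fun s hs => ⟨⟨ht.1.trans hs.1, hs.2⟩, mem_univ x⟩
  have hderiv : ∀ s ∈ Ico t T, HasDerivWithinAt (fun s => u s x)
      (-(a s x * iteratedDeriv 2 (u s) x)) (Ici s) s := fun s hs =>
    (h.hasDerivWithinAt s (hIco s hs) x).mono_of_mem_nhdsWithin <|
      mem_of_superset (Ico_mem_nhdsGE hs.2) (Ico_subset_Ico_left (hIco s hs).1)
  have hbound : ∀ s ∈ Ico t T, ‖-(a s x * iteratedDeriv 2 (u s) x)‖ ≤ C * K := by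
    intro s hs
    obtain ⟨ha0, haC⟩ := h.coeff_mem s (hIco s hs) x
    rw [norm_neg, Real.norm_eq_abs, abs_mul, abs_of_nonneg ha0]
    exact mul_le_mul haC (hK s (hIco s hs) x) (abs_nonneg _) (ha0.trans haC)
  rw [abs_sub_comm]
  exact norm_image_sub_le_of_norm_deriv_right_le_segment hcont hderiv hbound T ⟨ht.2, le_rfl⟩

def doublingFun (u : ℝ → ℝ → ℝ) (L δ K x₀ y₀ : ℝ) (p : ℝ × ℝ × ℝ) : ℝ :=
  u p.1 p.2.1 - u p.1 p.2.2 - L * (p.2.1 - p.2.2) - δ * ((p.2.1 - x₀) ^ 2 + (p.2.2 - y₀) ^ 2)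
    + K * p.1

theorem continuousOn_doublingFun (h : SolvesBackwardDiffusion T C a u) (L δ K x₀ y₀ : ℝ) :
    ContinuousOn (doublingFun u L δ K x₀ y₀) (Icc 0 T ×ˢ univ) := by
  have hu (f : ℝ × ℝ × ℝ → ℝ) (hf : Continuous f) :
      ContinuousOn (fun p : ℝ × ℝ × ℝ => u p.1 (f p)) (Icc 0 T ×ˢ univ) :=
    h.continuousOn.comp (f := fun p : ℝ × ℝ × ℝ => (p.1, f p)) (by fun_prop)
      fun p hp => ⟨hp.1, mem_univ _⟩
  exact ((((hu _ (by fun_prop)).sub (hu _ (by fun_prop))).sub (by fun_prop)).sub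
    (by fun_prop)).add (by fun_prop)

theorem exists_isMaxOn_doublingFun (h : SolvesBackwardDiffusion T C a u)
    {t₀ τ L M δ K x₀ y₀ : ℝ} {p₀ : ℝ × ℝ × ℝ} (ht₀ : 0 ≤ t₀) (hτT : τ ≤ T) (hδ : 0 < δ)
    (hK : 0 ≤ K) (hM : ∀ t ∈ Icc t₀ τ, ∀ x y, y ≤ x → u t x - u t y - L * (x - y) ≤ M)
    (hp₀ : p₀ ∈ Icc t₀ τ ×ˢ {q : ℝ × ℝ | q.2 ≤ q.1}) :
    ∃ p ∈ Icc t₀ τ ×ˢ {q : ℝ × ℝ | q.2 ≤ q.1},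
      IsMaxOn (doublingFun u L δ K x₀ y₀) (Icc t₀ τ ×ˢ {q : ℝ × ℝ | q.2 ≤ q.1}) p := by
  obtain ⟨R, hR0, hR⟩ : ∃ R ≥ 0, M + K * τ - doublingFun u L δ K x₀ y₀ p₀ < δ * R ^ 2 :=
    ((((tendsto_pow_atTop two_ne_zero).const_mul_atTop hδ).eventually_gt_atTop _).and
      (eventually_ge_atTop 0)).exists.imp fun R hR => ⟨hR.2, hR.1⟩
  refine ((h.continuousOn_doublingFun L δ K x₀ y₀).mono fun p hp =>
      ⟨⟨ht₀.trans hp.1.1, hp.1.2.trans hτT⟩, mem_univ _⟩).exists_isMaxOn'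
    (isClosed_Icc.prod (isClosed_le continuous_snd continuous_fst)) hp₀ ?_
  -- outside a compact set the penalty `δ ((x - x₀)² + (y - y₀)²)` exceeds `δ R²`
  filter_upwards [mem_inf_of_left (mem_cocompact.2 ⟨_,
      (isCompact_Icc (a := t₀) (b := τ)).prod (isCompact_closedBall (x₀, y₀) R), subset_rfl⟩),
    mem_inf_of_right (mem_principal_self _)] with p hpR hp
  obtain ⟨t, x, y⟩ := p
  have hxy : R ^ 2 < (x - x₀) ^ 2 + (y - y₀) ^ 2 := by
    simp only [mem_compl_iff, mem_prod, hp.1, true_and, Metric.mem_closedBall, Prod.dist_eq,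
      Real.dist_eq, max_le_iff, not_and_or, not_le] at hpR
    rcases hpR with hR' | hR'
    · nlinarith [sq_abs (x - x₀) ▸ pow_lt_pow_left₀ hR' hR0 two_ne_zero, sq_nonneg (y - y₀)]
    · nlinarith [sq_abs (y - y₀) ▸ pow_lt_pow_left₀ hR' hR0 two_ne_zero, sq_nonneg (x - x₀)]
  have := hM t hp.1 x y hp.2
  have := mul_le_mul_of_nonneg_left hp.1.2 hK
  have := mul_lt_mul_of_pos_left hxy hδ
  simp only [doublingFun] at hR ⊢
  linarith

theorem le_of_isLocalMax_doublingFun (h : SolvesBackwardDiffusion T C a u)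
    {ts τ xs ys x₀ y₀ L δ K : ℝ} (hts0 : 0 ≤ ts) (htsτ : ts < τ) (hτT : τ < T) (hδ : 0 ≤ δ)
    (hxy : IsLocalMax (fun q : ℝ × ℝ => doublingFun u L δ K x₀ y₀ (ts, q)) (xs, ys))
    (ht : IsMaxOn (fun t => doublingFun u L δ K x₀ y₀ (t, xs, ys)) (Icc ts τ) ts) :
    K ≤ 4 * C * δ := by
  have hts : ts ∈ Ico 0 T := ⟨hts0, htsτ.trans hτT⟩
  have hx : IsLocalMax (fun x => u ts x - (L * x + δ * (x - x₀) ^ 2)) xs := by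
    filter_upwards [hxy.comp_continuous (g := fun x => (x, ys)) (by fun_prop)] with x hx
    simp only [Function.comp, doublingFun] at hx
    linarith
  have hy : IsLocalMax (fun y => -u ts y - (-L * y + δ * (y - y₀) ^ 2)) ys := by
    filter_upwards [hxy.comp_continuous (g := fun y => (xs, y)) (by fun_prop)] with y hy
    simp only [Function.comp, doublingFun] at hy
    linarith
  have hxx : iteratedDeriv 2 (u ts) xs ≤ 2 * δ :=
    iteratedDeriv_two_le_of_isLocalMax_sub_sq (h.contDiff ts hts).contDiffAt hx
  have hyy : -iteratedDeriv 2 (u ts) ys ≤ 2 * δ := by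
    simpa [iteratedDeriv_fun_neg] using
      iteratedDeriv_two_le_of_isLocalMax_sub_sq (h.contDiff ts hts).contDiffAt.neg hy
  have hsub : Icc ts τ ⊆ Ico 0 T := fun s hs => ⟨hts0.trans hs.1, hs.2.trans_lt hτT⟩
  have hdt : K ≤ a ts xs * iteratedDeriv 2 (u ts) xs - a ts ys * iteratedDeriv 2 (u ts) ys := by
    have := ht.nonpos_of_hasDerivWithinAt_Icc htsτ <|
      (((((h.hasDerivWithinAt ts hts xs).sub (h.hasDerivWithinAt ts hts ys)).sub_const
        (L * (xs - ys))).sub_const (δ * ((xs - x₀) ^ 2 + (ys - y₀) ^ 2))).add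
          ((hasDerivWithinAt_id ts _).const_mul K)).mono hsub
    linarith
  obtain ⟨hax0, haxC⟩ := h.coeff_mem ts hts xs
  obtain ⟨hay0, hayC⟩ := h.coeff_mem ts hts ys
  nlinarith [mul_le_mul_of_nonneg_left hxx hax0, mul_le_mul_of_nonneg_left hyy hay0,
    mul_le_mul_of_nonneg_right haxC hδ, mul_le_mul_of_nonneg_right hayC hδ]

theorem sub_le_of_strip (h : SolvesBackwardDiffusion T C a u) {t₀ τ L M e K x₀ y₀ : ℝ}
    (ht₀ : 0 ≤ t₀) (ht₀τ : t₀ ≤ τ) (hτT : τ < T) (hK : 0 < K)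
    (hM : ∀ t ∈ Icc t₀ τ, ∀ x y, y ≤ x → u t x - u t y - L * (x - y) ≤ M)
    (he : ∀ x y, y ≤ x → u τ x - u τ y - L * (x - y) ≤ e) (hxy : y₀ ≤ x₀) :
    u t₀ x₀ - u t₀ y₀ - L * (x₀ - y₀) ≤ e + K * (τ - t₀) := by
  have hC : 0 ≤ C := nonempty_Icc.1 ⟨_, h.coeff_mem t₀ ⟨ht₀, ht₀τ.trans_lt hτT⟩ x₀⟩
  set δ := K / (4 * C + 1) with hδ
  have hδ0 : 0 < δ := by positivity
  have hKδ : 4 * C * δ < K := by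
    rw [hδ, mul_div_assoc', div_lt_iff₀ (by positivity)]
    nlinarith
  have hp₀ : (t₀, x₀, y₀) ∈ Icc t₀ τ ×ˢ {q : ℝ × ℝ | q.2 ≤ q.1} := ⟨⟨le_rfl, ht₀τ⟩, hxy⟩
  obtain ⟨⟨ts, xs, ys⟩, ⟨hts, hyx⟩, hmax⟩ :=
    h.exists_isMaxOn_doublingFun (L := L) (x₀ := x₀) (y₀ := y₀) ht₀ hτT.le hδ0 hK.le hM hp₀
  have hΨ₀ : doublingFun u L δ K x₀ y₀ (t₀, x₀, y₀) ≤ doublingFun u L δ K x₀ y₀ (ts, xs, ys) :=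
    hmax hp₀
  suffices doublingFun u L δ K x₀ y₀ (ts, xs, ys) ≤ e + K * τ by
    simp only [doublingFun, sub_self] at hΨ₀ this
    nlinarith
  rcases (show ys ≤ xs from hyx).eq_or_lt with rfl | hyx
  · have := he ys ys le_rfl
    have := mul_le_mul_of_nonneg_left hts.2 hK.le
    simp only [doublingFun]
    nlinarith [sq_nonneg (ys - x₀), sq_nonneg (ys - y₀)]
  rcases hts.2.eq_or_lt with rfl | htsτ
  · have := he xs ys hyx.le
    simp only [doublingFun]
    nlinarith [sq_nonneg (xs - x₀), sq_nonneg (ys - y₀)]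
  have hloc : IsLocalMax (fun q : ℝ × ℝ => doublingFun u L δ K x₀ y₀ (ts, q)) (xs, ys) := by
    filter_upwards [(isOpen_lt continuous_snd continuous_fst).mem_nhds hyx] with q hq
    exact hmax ⟨hts, hq.le⟩
  have htime : IsMaxOn (fun t => doublingFun u L δ K x₀ y₀ (t, xs, ys)) (Icc ts τ) ts :=
    isMaxOn_iff.2 fun t ht => hmax ⟨⟨hts.1.trans ht.1, ht.2⟩, hyx.le⟩
  exact absurd (h.le_of_isLocalMax_doublingFun (ht₀.trans hts.1) htsτ hτT hδ0.le hloc htime)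
    hKδ.not_ge

theorem sub_le_of_terminal (h : SolvesBackwardDiffusion T C a u) {K L : ℝ}
    (hK : ∀ t ∈ Ico 0 T, ∀ x, |iteratedDeriv 2 (u t) x| ≤ K)
    (hT : ∀ x y, y ≤ x → u T x - u T y ≤ L * (x - y)) :
    ∀ t ∈ Icc 0 T, ∀ x y, y ≤ x → u t x - u t y ≤ L * (x - y) := by
  intro t₀ ht₀ x₀ y₀ hxy
  rcases ht₀.2.eq_or_lt with rfl | ht₀T
  · exact hT x₀ y₀ hxy
  have hB : 0 ≤ C * K := mul_nonneg (nonempty_Icc.1 ⟨_, h.coeff_mem t₀ ⟨ht₀.1, ht₀T⟩ x₀⟩)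
    ((abs_nonneg _).trans (hK t₀ ⟨ht₀.1, ht₀T⟩ x₀))
  have hcrude : ∀ t ∈ Icc 0 T, ∀ x y, y ≤ x →
      u t x - u t y - L * (x - y) ≤ 2 * (C * K) * (T - t) := by
    intro t ht x y hxy
    have hx := abs_le.1 (h.abs_sub_terminal_le hK t ht x)
    have hy := abs_le.1 (h.abs_sub_terminal_le hK t ht y)
    linarith [hT x y hxy]
  have hstrip : ∀ τ ∈ Ico t₀ T, u t₀ x₀ - u t₀ y₀ - L * (x₀ - y₀) ≤ 2 * (C * K) * (T - τ) := by
    intro τ hτ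
    have hM : ∀ t ∈ Icc t₀ τ, ∀ x y, y ≤ x →
        u t x - u t y - L * (x - y) ≤ 2 * (C * K) * T := fun t ht x y hxy =>
      (hcrude t ⟨ht₀.1.trans ht.1, ht.2.trans hτ.2.le⟩ x y hxy).trans
        (by nlinarith [ht₀.1.trans ht.1])
    refine ge_of_tendsto (f := fun κ => 2 * (C * K) * (T - τ) + κ * (τ - t₀))
      (x := 𝓝[>] 0) ?_ ?_
    · have hc : Continuous fun κ : ℝ => 2 * (C * K) * (T - τ) + κ * (τ - t₀) := by fun_prop
      simpa using (hc.tendsto 0).mono_left nhdsWithin_le_nhds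
    · filter_upwards [self_mem_nhdsWithin] with κ hκ
      exact h.sub_le_of_strip ht₀.1 hτ.1 hτ.2 hκ hM
        (fun x y hxy => hcrude τ ⟨ht₀.1.trans hτ.1, hτ.2.le⟩ x y hxy) hxy
  have hc : Continuous fun τ : ℝ => 2 * (C * K) * (T - τ) := by fun_prop
  have hlim : Tendsto (fun τ => 2 * (C * K) * (T - τ)) (𝓝[<] T) (𝓝 0) := by
    simpa using (hc.tendsto T).mono_left nhdsWithin_le_nhds
  have := ge_of_tendsto hlim (mem_of_superset (Ico_mem_nhdsLT ht₀T) hstrip)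
  linarith

theorem abs_sub_le_of_terminal (h : SolvesBackwardDiffusion T C a u) {K L : ℝ}
    (hK : ∀ t ∈ Ico 0 T, ∀ x, |iteratedDeriv 2 (u t) x| ≤ K)
    (hT : ∀ x y, |u T x - u T y| ≤ L * |x - y|) :
    ∀ t ∈ Icc 0 T, ∀ x y, |u t x - u t y| ≤ L * |x - y| := by
  have hpos := h.sub_le_of_terminal hK fun x y hxy =>
    (le_abs_self _).trans ((hT x y).trans_eq (by rw [abs_of_nonneg (sub_nonneg.2 hxy)]))
  have hneg := h.neg.sub_le_of_terminal (by simpa [iteratedDeriv_fun_neg] using hK) fun x y hxy =>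
    (neg_le_abs _).trans_eq' (by ring) |>.trans
      ((hT x y).trans_eq (by rw [abs_of_nonneg (sub_nonneg.2 hxy)]))
  intro t ht x y
  wlog hxy : y ≤ x generalizing x y
  · rw [abs_sub_comm, abs_sub_comm x]
    exact this y x (le_of_not_ge hxy)
  have h1 := hpos t ht x y hxy
  have h2 := hneg t ht x y hxy
  rw [abs_of_nonneg (sub_nonneg.2 hxy), abs_le]
  constructor <;> linarith

end SolvesBackwardDiffusion

namespace Standing

theorem Deps_subset_Deps (S : Standing) {ε ε' : ℝ} (hε : 0 < ε) (h : ε ≤ ε') :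
    S.Deps ε' ⊆ S.Deps ε := fun _ hp =>
  ⟨hp.1, hp.2.trans (by exact_mod_cast one_div_le_one_div_of_le hε h)⟩

theorem Hyp.mem_Deps_of_mem_uIcc {S : Standing} (hS : S.Hyp) {ε t x z w : ℝ}
    (hε : ε ∈ Ioc 0 S.eps0) (hz : (t, x, z) ∈ S.Deps ε) (hw : w ∈ uIcc 0 z) :
    (t, x, w) ∈ S.Deps ε := by
  obtain ⟨γ, -, hγ⟩ := hS.Deps_eq ε hε
  have h0 : (t, x, (0 : ℝ)) ∈ S.Deps ε :=
    ⟨hz.1, by simp only [(hS.F_zero t hz.1 x).1]; exact_mod_cast (one_div_pos.2 hε.1).le⟩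
  rw [hγ] at hz h0 ⊢
  exact ⟨hz.1, hw.2.trans (max_le h0.2 hz.2)⟩

theorem Hyp.exists_Fbar_eq_mul {S : Standing} (hS : S.Hyp) {ε : ℝ} (hε : ε ∈ Ioc 0 S.eps0) :
    ∃ C, ∀ p ∈ S.DepsK ε (1 / ε), ∃ c ∈ Icc 0 C, S.Fbar p.1 p.2.1 p.2.2 = c * p.2.2 := by
  obtain ⟨C, -, hC⟩ := hS.FbarZ_bdd ε hε
  refine ⟨C, fun ⟨t, x, z⟩ hp => ?_⟩
  have hseg : ∀ w ∈ uIcc 0 z, (t, x, w) ∈ S.DepsK ε (1 / ε) := fun w hw =>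
    ⟨hS.mem_Deps_of_mem_uIcc hε hp.1 hw,
      (by simpa using abs_sub_left_of_mem_uIcc hw : |w| ≤ |z|).trans hp.2⟩
  exact exists_mem_Icc_eq_mul_of_hasDerivAt (hS.F_zero t hp.1.1 x).2
    (fun w hw => hS.Fbar_dZ (t, x, w) ⟨hp.1.1, (hseg w hw).1.2.trans_lt (EReal.coe_lt_top _)⟩)
    fun w hw => ⟨(hS.FbarZ_pos ε hε _ (hseg w hw).1).le, (hC _ (hseg w hw)).1⟩

end Standing

theorem lipschitz_propagation_general (S : Standing) (hS : S.Hyp)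
    (KΦ εΦ : ℝ) (Φ : ℝ → ℝ) (K' ε' : ℝ) (u : ℝ → ℝ → ℝ)
    (hsol : Standing.SolHyp S KΦ εΦ Φ K' ε' u)
    (L : ℝ) (hLip : ∀ x x' : ℝ, |Φ x - Φ x'| ≤ L * |x - x'|) :
    ∀ t ∈ Set.Icc (0 : ℝ) S.T, ∀ x x' : ℝ, |u t x - u t x'| ≤ L * |x - x'| := by
  obtain ⟨hε'0, hε'⟩ := hsol.eps'_mem
  -- `ε ≤ ε'` keeps `∂²ₓu` in `D_ε`, and `ε ≤ 1/K'` keeps it in `[-1/ε, 1/ε]`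
  set ε := min ε' (1 / K')
  have hε0 : 0 < ε := lt_min hε'0 (one_div_pos.2 hsol.K'_pos)
  obtain ⟨C, hC⟩ := hS.exists_Fbar_eq_mul ⟨hε0, (min_le_left _ _).trans hε'⟩
  have hdom : ∀ t ∈ Icc 0 S.T, ∀ x, (t, x, d2x u t x) ∈ S.DepsK ε (1 / ε) := fun t ht x =>
    ⟨S.Deps_subset_Deps hε0 (min_le_left _ _) (hsol.u_dom t ht x),
      (hsol.uxx_bdd t ht x).trans ((le_one_div hsol.K'_pos hε0).2 (min_le_right _ _))⟩
  choose! a ha hFa using fun t ht x => hC _ (hdom t ht x)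
  have hdiff : SolvesBackwardDiffusion S.T C a u :=
    { continuousOn := hsol.u_cont
      contDiff := fun t ht => (hsol.u_C4x t ht).of_le (by norm_num)
      hasDerivWithinAt := fun t ht x => hFa t (Ico_subset_Icc_self ht) x ▸ hsol.pde t ht x
      coeff_mem := fun t ht x => ha t (Ico_subset_Icc_self ht) x }
  refine hdiff.abs_sub_le_of_terminal (fun t ht x => hsol.uxx_bdd t (Ico_subset_Icc_self ht) x) ?_
  simpa only [hsol.terminal] using hLip

/-- **Proposition 3.6.c** (propagation of Lipschitz regularity).
Under the standing assumptions and the solution hypotheses, if `Φ` is globally Lipschitz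
with constant `L > 0`, then `x ↦ u(t,x)` is `L`-Lipschitz for every `t ∈ [0,T]`. -/
theorem lipschitz_propagation (S : Standing) (hS : S.Hyp)
    (KΦ εΦ : ℝ) (Φ : ℝ → ℝ) (K' ε' : ℝ) (u : ℝ → ℝ → ℝ)
    (hsol : Standing.SolHyp S KΦ εΦ Φ K' ε' u)
    (L : ℝ) (hL : 0 < L) (hLip : ∀ x x' : ℝ, |Φ x - Φ x'| ≤ L * |x - x'|) :
    ∀ t ∈ Set.Icc (0 : ℝ) S.T, ∀ x x' : ℝ, |u t x - u t x'| ≤ L * |x - x'| :=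
  lipschitz_propagation_general S hS KΦ εΦ Φ K' ε' u hsol L hLip
end
end

section
/- Uniqueness of classical solutions (Proposition 3.6.d): Under the standing assumptions and the solution hypotheses, u is the unique solution in the following class: if u' :[0,T]×ℝ→ℝ is continuous, ∂ₜu', ∂ₓu', ∂²ₓu' exist and are continuous on [0,T)×ℝ, ∂²ₓu' is bounded, (t,x,∂²ₓu'(t,x))∈D_{ε''} for all (t,x)∈[0,T)×ℝ and some ε''∈(0,ε₀], and u' satisfies ∂ₜu'(t,x)+F̄(t,x,∂²ₓu'(t,x))=0 on [0,T)×ℝ with u'(T,·)=Φ, then u'=u on [0,T]×ℝ. -/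
open Set Filter

noncomputable section

/-!
If `f` and `g` are two classical solutions with the same terminal value, `w = f - g` satisfies
`∂ₜw ≥ -C (∂²ₓw)⁺` on `[0,T) × ℝ`: along the segment between `∂²ₓg` and `∂²ₓf`, which stays in
`D_{ε,1/ε}` because `D_ε = {z ≤ γ̄_ε}`, the map `z ↦ F̄(t,x,z)` is nondecreasing and
`C`-Lipschitz by (R4). Bounded second derivatives give `w` at most quadratic growth, so if
`w - η e^{(C+1)(T-t)} cosh x` is positive somewhere it attains a positive maximum on `[0,T] × ℝ`.
That maximum is not at `t = T`, and at an earlier time the second-derivative test in `x` and the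
one-sided first-derivative test in `t` contradict each other. Letting `η → 0` gives `f ≤ g`.
-/
open Real Topology

theorem IsLocalMax.iteratedDeriv_two_nonpos {f : ℝ → ℝ} {a : ℝ} (h : IsLocalMax f a)
    (hc : ContinuousAt f a) : iteratedDeriv 2 f a ≤ 0 := by
  simp only [iteratedDeriv_eq_iterate, Function.iterate_succ, Function.iterate_zero,
    Function.comp_apply, Function.id_comp]
  by_contra! hpos
  have hmin : IsLocalMin f a := isLocalMin_of_deriv_deriv_pos hpos h.deriv_eq_zero hc
  have hconst : f =ᶠ[𝓝 a] fun _ => f a :=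
    (h.and hmin).mono fun x hx => le_antisymm hx.1 hx.2
  have hzero : deriv (deriv f) a = 0 := by simpa using hconst.deriv.deriv_eq
  exact hpos.ne' hzero

theorem HasDerivWithinAt.nonpos_of_isMaxOn_Ico {f : ℝ → ℝ} {f' a b t : ℝ}
    (hf : HasDerivWithinAt f f' (Ico a b) t) (ht : t ∈ Ico a b)
    (hmax : IsMaxOn f (Ico a b) t) : f' ≤ 0 := by
  have hcone : (1 : ℝ) ∈ posTangentConeAt (Ico a b) t := by
    rw [one_mem_posTangentConeAt_iff_frequently]
    have hev : ∀ᶠ s in 𝓝[>] t, s ∈ Ico a b :=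
      mem_of_superset (nhdsWithin_mono _ Ioi_subset_Ici_self (Ico_mem_nhdsGE ht.2))
        (Ico_subset_Ico_left ht.1)
    exact hev.frequently
  simpa using hmax.localize.hasFDerivWithinAt_nonpos hf.hasFDerivWithinAt hcone

theorem sub_le_mul_max_sub_zero_of_hasDerivAt {φ φ' : ℝ → ℝ} {C z z' : ℝ}
    (hφ : ∀ w ∈ uIcc z z', HasDerivAt φ (φ' w) w) (hnonneg : ∀ w ∈ uIcc z z', 0 ≤ φ' w)
    (hle : ∀ w ∈ uIcc z z', φ' w ≤ C) : φ z' - φ z ≤ C * max (z' - z) 0 := by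
  have hint : ∀ w ∈ interior (uIcc z z'), w ∈ uIcc z z' := fun _ hw => interior_subset hw
  rcases le_total z' z with h | h
  · have hmono : MonotoneOn φ (uIcc z z') :=
      monotoneOn_of_hasDerivWithinAt_nonneg (convex_uIcc z z')
        (fun w hw => (hφ w hw).continuousAt.continuousWithinAt)
        (fun w hw => (hφ w (hint w hw)).hasDerivWithinAt) fun w hw => hnonneg w (hint w hw)
    have hC : 0 ≤ C := (hnonneg z left_mem_uIcc).trans (hle z left_mem_uIcc)
    have := hmono right_mem_uIcc left_mem_uIcc h
    rw [max_eq_right (by linarith)]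
    linarith
  · have hψ : ∀ w ∈ uIcc z z', HasDerivAt (fun y => C * y - φ y) (C - φ' w) w := fun w hw => by
      simpa using ((hasDerivAt_id' w).const_mul C).fun_sub (hφ w hw)
    have hmono : MonotoneOn (fun y => C * y - φ y) (uIcc z z') :=
      monotoneOn_of_hasDerivWithinAt_nonneg (convex_uIcc z z')
        (fun w hw => (hψ w hw).continuousAt.continuousWithinAt)
        (fun w hw => (hψ w (hint w hw)).hasDerivWithinAt)
        fun w hw => sub_nonneg.2 (hle w (hint w hw))
    have := hmono left_mem_uIcc right_mem_uIcc h
    rw [max_eq_left (by linarith)]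
    linarith

theorem abs_sub_sub_deriv_mul_le {h : ℝ → ℝ} {K : ℝ} (hh : ContDiff ℝ 2 h)
    (hK : ∀ x, |iteratedDeriv 2 h x| ≤ K) (x : ℝ) :
    |h x - h 0 - deriv h 0 * x| ≤ K * x ^ 2 := by
  have hd : Differentiable ℝ h := hh.differentiable (by norm_num)
  have hd' : Differentiable ℝ (deriv h) := by
    simpa using hh.differentiable_iteratedDeriv 1 (by norm_num)
  have hlip : ∀ y, |deriv h y - deriv h 0| ≤ K * |y| := fun y => by
    simpa using Convex.norm_image_sub_le_of_norm_deriv_le (fun z _ => hd' z)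
      (fun z _ => by simpa [iteratedDeriv_succ] using hK z) convex_univ (mem_univ 0) (mem_univ y)
  have := Convex.norm_image_sub_le_of_norm_hasDerivWithin_le
    (f := fun y => h y - deriv h 0 * y) (f' := fun y => deriv h y - deriv h 0) (C := K * |x|)
    (fun y _ => by
      simpa using ((hd y).hasDerivAt.fun_sub ((hasDerivAt_id' y).const_mul _)).hasDerivWithinAt)
    (fun y hy => (hlip y).trans (mul_le_mul_of_nonneg_left
      (by simpa using abs_sub_left_of_mem_uIcc hy) ((abs_nonneg _).trans (hK 0))))
    (convex_uIcc 0 x) left_mem_uIcc right_mem_uIcc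
  rw [sub_right_comm]
  simpa [sq, mul_assoc] using this

theorem abs_le_mul_one_add_sq {h : ℝ → ℝ} {K A : ℝ} (hh : ContDiff ℝ 2 h)
    (hK : ∀ x, |iteratedDeriv 2 h x| ≤ K) (h0 : |h 0| ≤ A) (h1 : |h 1| ≤ A) (x : ℝ) :
    |h x| ≤ (3 * A + 2 * K) * (1 + x ^ 2) := by
  have hK0 : 0 ≤ K := (abs_nonneg _).trans (hK 0)
  have hA0 : 0 ≤ A := (abs_nonneg _).trans h0
  have hd0 : |deriv h 0| ≤ 2 * A + K := by
    have h1' := abs_sub_sub_deriv_mul_le hh hK 1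
    rw [mul_one, one_pow, mul_one] at h1'
    calc |deriv h 0| = |(h 1 - h 0) - (h 1 - h 0 - deriv h 0)| := by ring_nf
      _ ≤ |h 1| + |h 0| + K := by
          linarith [abs_sub (h 1 - h 0) (h 1 - h 0 - deriv h 0), abs_sub (h 1) (h 0)]
      _ ≤ 2 * A + K := by linarith
  have hx : |x| ≤ 1 + x ^ 2 := by nlinarith [sq_abs x, abs_nonneg x]
  calc |h x| = |(h x - h 0 - deriv h 0 * x) + h 0 + deriv h 0 * x| := by ring_nf
    _ ≤ |h x - h 0 - deriv h 0 * x| + |h 0| + |deriv h 0| * |x| := by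
        rw [← abs_mul]; exact abs_add_three _ _ _
    _ ≤ K * x ^ 2 + A + (2 * A + K) * (1 + x ^ 2) := by
        gcongr
        exact abs_sub_sub_deriv_mul_le hh hK x
    _ ≤ (3 * A + 2 * K) * (1 + x ^ 2) := by nlinarith [sq_nonneg x, mul_nonneg hA0 (sq_nonneg x)]

theorem exists_abs_le_mul_one_add_sq {T K : ℝ} {w : ℝ → ℝ → ℝ}
    (hcont : ContinuousOn (fun p : ℝ × ℝ => w p.1 p.2) (Icc 0 T ×ˢ univ))
    (hC2 : ∀ t ∈ Ico 0 T, ContDiff ℝ 2 (w t)) (hK : ∀ t ∈ Ico 0 T, ∀ x, |d2x w t x| ≤ K) :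
    ∃ Q, ∀ t ∈ Ico 0 T, ∀ x, |w t x| ≤ Q * (1 + x ^ 2) := by
  have hK01 : IsCompact (Icc 0 T ×ˢ Icc (0 : ℝ) 1) := isCompact_Icc.prod isCompact_Icc
  obtain ⟨A, hA⟩ := hK01.exists_bound_of_continuousOn (hcont.mono (prod_mono_right (subset_univ _)))
  have hA' : ∀ t ∈ Ico 0 T, ∀ y ∈ Icc (0 : ℝ) 1, |w t y| ≤ A := fun t ht y hy =>
    by simpa using hA (t, y) ⟨Ico_subset_Icc_self ht, hy⟩
  exact ⟨3 * A + 2 * K, fun t ht x => abs_le_mul_one_add_sq (hC2 t ht) (hK t ht)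
    (hA' t ht 0 (by simp)) (hA' t ht 1 (by simp)) x⟩

theorem exp_abs_le_two_mul_cosh (x : ℝ) : exp |x| ≤ 2 * cosh x := by
  rw [cosh_eq]
  rcases abs_cases x with ⟨h, -⟩ | ⟨h, -⟩ <;> rw [h] <;> linarith [exp_pos x, exp_pos (-x)]

theorem exists_mul_one_add_sq_lt_mul_cosh (Q : ℝ) {η : ℝ} (hη : 0 < η) :
    ∃ R, ∀ x, R < |x| → Q * (1 + x ^ 2) < η * cosh x := by
  have hlim : Tendsto (fun s : ℝ => Q * (1 + s ^ 2) * exp (-s)) atTop (𝓝 0) := by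
    have h := ((tendsto_pow_mul_exp_neg_atTop_nhds_zero 0).add
      (tendsto_pow_mul_exp_neg_atTop_nhds_zero 2)).const_mul Q
    simpa [add_mul, mul_assoc] using h
  obtain ⟨R, hR⟩ := eventually_atTop.1 (hlim.eventually_lt_const (half_pos hη))
  refine ⟨R, fun x hx => ?_⟩
  have h := hR |x| hx.le
  rw [sq_abs] at h
  calc Q * (1 + x ^ 2) = Q * (1 + x ^ 2) * exp (-|x|) * exp |x| := by
        rw [mul_assoc, ← exp_add, neg_add_cancel, exp_zero, mul_one]
    _ < η / 2 * exp |x| := mul_lt_mul_of_pos_right h (exp_pos _)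
    _ ≤ η * cosh x := by nlinarith [exp_abs_le_two_mul_cosh x]

def coshBarrier (lam T η t x : ℝ) : ℝ := η * exp (lam * (T - t)) * cosh x

section coshBarrier

variable {lam T η : ℝ}

theorem coshBarrier_pos (hη : 0 < η) (t x : ℝ) : 0 < coshBarrier lam T η t x := by
  unfold coshBarrier
  have := cosh_pos x
  positivity

theorem coshBarrier_eq_mul (lam T η t x : ℝ) :
    coshBarrier lam T η t x = η * coshBarrier lam T 1 t x := by
  unfold coshBarrier
  ring

theorem mul_cosh_le_coshBarrier (hlam : 0 ≤ lam) (hη : 0 ≤ η) {t : ℝ} (ht : t ≤ T) (x : ℝ) :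
    η * cosh x ≤ coshBarrier lam T η t x := by
  have : 1 ≤ exp (lam * (T - t)) := one_le_exp (mul_nonneg hlam (sub_nonneg.2 ht))
  unfold coshBarrier
  have := cosh_pos x
  nlinarith [mul_nonneg hη this.le]

theorem continuous_coshBarrier :
    Continuous fun p : ℝ × ℝ => coshBarrier lam T η p.1 p.2 := by
  unfold coshBarrier
  fun_prop

theorem hasDerivAt_coshBarrier_time (t x : ℝ) :
    HasDerivAt (fun s => coshBarrier lam T η s x) (-(lam * coshBarrier lam T η t x)) t := by
  have h := ((((hasDerivAt_id' t).const_sub T).const_mul lam).exp.const_mul η).mul_const (cosh x)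
  exact h.congr_deriv (by unfold coshBarrier; ring)

theorem contDiff_coshBarrier (t : ℝ) : ContDiff ℝ 2 (coshBarrier lam T η t) := by
  unfold coshBarrier
  fun_prop

theorem iteratedDeriv_two_coshBarrier (t x : ℝ) :
    iteratedDeriv 2 (coshBarrier lam T η t) x = coshBarrier lam T η t x := by
  have h := iteratedDeriv_const_mul (η * exp (lam * (T - t))) (contDiff_cosh (n := 2)).contDiffAt
    (x := x)
  rwa [show iteratedDeriv 2 cosh = cosh from iteratedDeriv_even_cosh 1] at h

end coshBarrier

section MaximumPrinciple

variable {T C : ℝ} {w wt : ℝ → ℝ → ℝ}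

theorem not_isMaxOn_sub_coshBarrier {η t₀ x₀ : ℝ} (hη : 0 < η) (hC : 0 ≤ C) (ht₀ : t₀ ∈ Ico 0 T)
    (hC2 : ContDiff ℝ 2 (w t₀))
    (hwt : HasDerivWithinAt (fun s => w s x₀) (wt t₀ x₀) (Ico 0 T) t₀)
    (hsub : -(C * max (d2x w t₀ x₀) 0) ≤ wt t₀ x₀)
    (hmax : IsMaxOn (fun p : ℝ × ℝ => w p.1 p.2 - coshBarrier (C + 1) T η p.1 p.2)
      (Icc 0 T ×ˢ univ) (t₀, x₀)) : False := by
  set δ := coshBarrier (C + 1) T η t₀ x₀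
  have hδ : 0 < δ := coshBarrier_pos hη t₀ x₀
  have hspace : IsLocalMax (fun x => w t₀ x - coshBarrier (C + 1) T η t₀ x) x₀ :=
    Eventually.of_forall fun x => isMaxOn_iff.1 hmax (t₀, x) ⟨Ico_subset_Icc_self ht₀, mem_univ x⟩
  have hxx : d2x w t₀ x₀ ≤ δ := by
    have hb := contDiff_coshBarrier (lam := C + 1) (T := T) (η := η) t₀
    have h := hspace.iteratedDeriv_two_nonpos (hC2.sub hb).continuous.continuousAt
    rw [iteratedDeriv_fun_sub hC2.contDiffAt hb.contDiffAt,
      iteratedDeriv_two_coshBarrier] at h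
    exact sub_nonpos.1 h
  have htime : wt t₀ x₀ - -((C + 1) * δ) ≤ 0 :=
    (hwt.sub (hasDerivAt_coshBarrier_time t₀ x₀).hasDerivWithinAt).nonpos_of_isMaxOn_Ico ht₀
      fun s hs => isMaxOn_iff.1 hmax (s, x₀) ⟨Ico_subset_Icc_self hs, mem_univ x₀⟩
  have hCδ : C * max (d2x w t₀ x₀) 0 ≤ C * δ := mul_le_mul_of_nonneg_left (max_le hxx hδ.le) hC
  linarith

theorem le_coshBarrier {Q η : ℝ} (hη : 0 < η) (hC : 0 ≤ C)
    (hcont : ContinuousOn (fun p : ℝ × ℝ => w p.1 p.2) (Icc 0 T ×ˢ univ))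
    (hC2 : ∀ t ∈ Ico 0 T, ContDiff ℝ 2 (w t))
    (hgrowth : ∀ t ∈ Ico 0 T, ∀ x, w t x ≤ Q * (1 + x ^ 2))
    (hwt : ∀ t ∈ Ico 0 T, ∀ x, HasDerivWithinAt (fun s => w s x) (wt t x) (Ico 0 T) t)
    (hsub : ∀ t ∈ Ico 0 T, ∀ x, -(C * max (d2x w t x) 0) ≤ wt t x)
    (hterm : ∀ x, w T x ≤ 0) :
    ∀ t ∈ Icc 0 T, ∀ x, w t x ≤ coshBarrier (C + 1) T η t x := by
  set v : ℝ × ℝ → ℝ := fun p => w p.1 p.2 - coshBarrier (C + 1) T η p.1 p.2 with hv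
  by_contra! hpos
  obtain ⟨t₁, ht₁, x₁, hx₁⟩ := hpos
  have hv₁ : 0 < v (t₁, x₁) := sub_pos.2 hx₁
  obtain ⟨R, hR⟩ := exists_mul_one_add_sq_lt_mul_cosh Q hη
  have hnegT : ∀ x, v (T, x) < 0 := fun x => by
    have := coshBarrier_pos (lam := C + 1) (T := T) hη T x
    simp only [hv]
    linarith [hterm x]
  have hneg : ∀ t ∈ Icc 0 T, ∀ x, R < |x| → v (t, x) < 0 := by
    intro t ht x hx
    rcases ht.2.eq_or_lt with rfl | htT
    · exact hnegT x
    · have := mul_cosh_le_coshBarrier (by linarith) hη.le ht.2 x (lam := C + 1)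
      simp only [hv]
      linarith [hgrowth t ⟨ht.1, htT⟩ x, hR x hx]
  have hbox : IsCompact (Icc 0 T ×ˢ Icc (-R) R) := isCompact_Icc.prod isCompact_Icc
  have hfar : ∀ᶠ p in cocompact (ℝ × ℝ) ⊓ 𝓟 (Icc 0 T ×ˢ univ), v p ≤ v (t₁, x₁) := by
    filter_upwards [mem_inf_of_left hbox.compl_mem_cocompact,
      mem_inf_of_right (mem_principal_self _)] with p hpbox hp
    refine (hneg p.1 hp.1 p.2 ?_).le.trans hv₁.le
    by_contra! hpR
    exact hpbox ⟨hp.1, abs_le.1 hpR⟩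
  have hvcont : ContinuousOn v (Icc 0 T ×ˢ univ) := hcont.sub continuous_coshBarrier.continuousOn
  obtain ⟨⟨t₀, x₀⟩, ⟨ht₀, -⟩, hmax⟩ :=
    hvcont.exists_isMaxOn' (isClosed_Icc.prod isClosed_univ) (mk_mem_prod ht₁ (mem_univ x₁)) hfar
  have hv₀ : 0 < v (t₀, x₀) := hv₁.trans_le (hmax (mk_mem_prod ht₁ (mem_univ x₁)))
  have ht₀T : t₀ < T := ht₀.2.lt_of_ne fun h => lt_asymm (hnegT x₀) (h ▸ hv₀)
  have ht₀' : t₀ ∈ Ico 0 T := ⟨ht₀.1, ht₀T⟩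
  exact not_isMaxOn_sub_coshBarrier hη hC ht₀' (hC2 t₀ ht₀') (hwt t₀ ht₀' x₀) (hsub t₀ ht₀' x₀) hmax

-- `hsub` says that `w` is a subsolution of `-∂ₜw - C (∂²ₓw)⁺ = 0`.
theorem le_zero_of_parabolic_subsolution {Q : ℝ} (hC : 0 ≤ C)
    (hcont : ContinuousOn (fun p : ℝ × ℝ => w p.1 p.2) (Icc 0 T ×ˢ univ))
    (hC2 : ∀ t ∈ Ico 0 T, ContDiff ℝ 2 (w t))
    (hgrowth : ∀ t ∈ Ico 0 T, ∀ x, w t x ≤ Q * (1 + x ^ 2))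
    (hwt : ∀ t ∈ Ico 0 T, ∀ x, HasDerivWithinAt (fun s => w s x) (wt t x) (Ico 0 T) t)
    (hsub : ∀ t ∈ Ico 0 T, ∀ x, -(C * max (d2x w t x) 0) ≤ wt t x)
    (hterm : ∀ x, w T x ≤ 0) :
    ∀ t ∈ Icc 0 T, ∀ x, w t x ≤ 0 := by
  intro t ht x
  refine le_of_forall_pos_le_add fun ε hε => ?_
  have hb := coshBarrier_pos (lam := C + 1) (T := T) one_pos t x
  calc w t x ≤ coshBarrier (C + 1) T (ε / coshBarrier (C + 1) T 1 t x) t x :=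
        le_coshBarrier (div_pos hε hb) hC hcont hC2 hgrowth hwt hsub hterm t ht x
    _ = 0 + ε := by rw [coshBarrier_eq_mul, div_mul_cancel₀ _ hb.ne', zero_add]

end MaximumPrinciple

theorem exists_pos_le_and_le_one_div {ε₁ : ℝ} (hε₁ : 0 < ε₁) (K : ℝ) :
    ∃ ε, 0 < ε ∧ ε ≤ ε₁ ∧ K ≤ 1 / ε := by
  have hK : 0 < |K| + 1 := by positivity
  refine ⟨min ε₁ (1 / (|K| + 1)), lt_min hε₁ (by positivity), min_le_left _ _, ?_⟩
  calc K ≤ |K| + 1 := by linarith [le_abs_self K]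
    _ = 1 / (1 / (|K| + 1)) := (one_div_one_div _).symm
    _ ≤ 1 / min ε₁ (1 / (|K| + 1)) :=
        one_div_le_one_div_of_le (lt_min hε₁ (by positivity)) (min_le_right _ _)

theorem d2x_sub {f g : ℝ → ℝ → ℝ} {t x : ℝ} (hf : ContDiff ℝ 2 (f t))
    (hg : ContDiff ℝ 2 (g t)) :
    d2x (fun t x => f t x - g t x) t x = d2x f t x - d2x g t x :=
  iteratedDeriv_fun_sub hf.contDiffAt hg.contDiffAt

namespace Standing

variable {S : Standing}

theorem Deps_subset_D (ε : ℝ) : S.Deps ε ⊆ S.D :=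
  fun _ hp => ⟨hp.1, hp.2.trans_lt (EReal.coe_lt_top _)⟩

theorem Deps_anti {ε₁ ε₂ : ℝ} (hε₁ : 0 < ε₁) (h : ε₁ ≤ ε₂) : S.Deps ε₂ ⊆ S.Deps ε₁ :=
  fun _ hp => ⟨hp.1, hp.2.trans (EReal.coe_le_coe_iff.2 (one_div_le_one_div_of_le hε₁ h))⟩

structure IsClassicalSolution (S : Standing) (u : ℝ → ℝ → ℝ) : Prop where
  cont : ContinuousOn (fun p : ℝ × ℝ => u p.1 p.2) (Icc 0 S.T ×ˢ univ)
  contDiff : ∀ t ∈ Ico 0 S.T, ContDiff ℝ 2 (u t)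
  d2x_bdd : ∃ K, ∀ t ∈ Ico 0 S.T, ∀ x, |d2x u t x| ≤ K
  d2x_mem : ∃ ε ∈ Ioc 0 S.eps0, ∀ t ∈ Ico 0 S.T, ∀ x, (t, x, d2x u t x) ∈ S.Deps ε
  pde : ∀ t ∈ Ico 0 S.T, ∀ x,
    HasDerivWithinAt (fun s => u s x) (-(S.Fbar t x (d2x u t x))) (Ico 0 S.T) t

theorem SolHyp.isClassicalSolution {KΦ εΦ K' ε' : ℝ} {Φ : ℝ → ℝ} {u : ℝ → ℝ → ℝ}
    (hsol : S.SolHyp KΦ εΦ Φ K' ε' u) : S.IsClassicalSolution u where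
  cont := hsol.u_cont
  contDiff t ht := (hsol.u_C4x t ht).of_le (by norm_num)
  d2x_bdd := ⟨K', fun t ht => hsol.uxx_bdd t (Ico_subset_Icc_self ht)⟩
  d2x_mem := ⟨ε', hsol.eps'_mem, fun t ht => hsol.u_dom t (Ico_subset_Icc_self ht)⟩
  pde := hsol.pde

namespace Hyp

theorem mem_DepsK_of_mem_uIcc (hS : S.Hyp) {ε k t x z z' w : ℝ} (hε : ε ∈ Ioc 0 S.eps0)
    (hz : (t, x, z) ∈ S.DepsK ε k)
    (hz' : (t, x, z') ∈ S.DepsK ε k) (hw : w ∈ uIcc z z') : (t, x, w) ∈ S.DepsK ε k := by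
  obtain ⟨γ, -, hγ⟩ := hS.Deps_eq ε hε
  simp only [DepsK, hγ, mem_inter_iff, mem_ofPred_eq, abs_le] at hz hz' ⊢
  rcases mem_uIcc.1 hw with ⟨h₁, h₂⟩ | ⟨h₁, h₂⟩ <;>
    exact ⟨⟨hz.1.1, by linarith [hz.1.2, hz'.1.2]⟩, by linarith [hz.2.1, hz'.2.1],
      by linarith [hz.2.2, hz'.2.2]⟩

theorem exists_Fbar_sub_le (hS : S.Hyp) {ε : ℝ} (hε : ε ∈ Ioc 0 S.eps0) :
    ∃ C, 0 ≤ C ∧ ∀ t x z z', (t, x, z) ∈ S.DepsK ε (1 / ε) → (t, x, z') ∈ S.DepsK ε (1 / ε) →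
      S.Fbar t x z' - S.Fbar t x z ≤ C * max (z' - z) 0 := by
  obtain ⟨C, hC, hCbdd⟩ := hS.FbarZ_bdd ε hε
  refine ⟨C, hC.le, fun t x z z' hz hz' => ?_⟩
  have hseg := fun w (hw : w ∈ uIcc z z') => hS.mem_DepsK_of_mem_uIcc hε hz hz' hw
  exact sub_le_mul_max_sub_zero_of_hasDerivAt
    (fun w hw => hS.Fbar_dZ (t, x, w) (S.Deps_subset_D ε (hseg w hw).1))
    (fun w hw => (hS.FbarZ_pos ε hε (t, x, w) (hseg w hw).1).le)
    fun w hw => (hCbdd (t, x, w) (hseg w hw)).1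

theorem le_of_isClassicalSolution (hS : S.Hyp) {f g : ℝ → ℝ → ℝ}
    (hf : S.IsClassicalSolution f) (hg : S.IsClassicalSolution g)
    (hT : ∀ x, f S.T x = g S.T x) : ∀ t ∈ Icc 0 S.T, ∀ x, f t x ≤ g t x := by
  obtain ⟨Kf, hKf⟩ := hf.d2x_bdd
  obtain ⟨Kg, hKg⟩ := hg.d2x_bdd
  obtain ⟨εf, hεf, hfD⟩ := hf.d2x_mem
  obtain ⟨εg, hεg, hgD⟩ := hg.d2x_mem
  obtain ⟨ε, hε0, hεle, hεK⟩ := exists_pos_le_and_le_one_div (lt_min hεf.1 hεg.1) (max Kf Kg)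
  have hε : ε ∈ Ioc 0 S.eps0 := ⟨hε0, hεle.trans ((min_le_left _ _).trans hεf.2)⟩
  have hfK : ∀ t ∈ Ico 0 S.T, ∀ x, (t, x, d2x f t x) ∈ S.DepsK ε (1 / ε) := fun t ht x =>
    ⟨S.Deps_anti hε0 (hεle.trans (min_le_left _ _)) (hfD t ht x),
      (hKf t ht x).trans ((le_max_left _ _).trans hεK)⟩
  have hgK : ∀ t ∈ Ico 0 S.T, ∀ x, (t, x, d2x g t x) ∈ S.DepsK ε (1 / ε) := fun t ht x =>
    ⟨S.Deps_anti hε0 (hεle.trans (min_le_right _ _)) (hgD t ht x),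
      (hKg t ht x).trans ((le_max_right _ _).trans hεK)⟩
  obtain ⟨C, hC, hFbar⟩ := hS.exists_Fbar_sub_le hε
  have hC2 : ∀ t ∈ Ico 0 S.T, ContDiff ℝ 2 fun x => f t x - g t x :=
    fun t ht => (hf.contDiff t ht).sub (hg.contDiff t ht)
  obtain ⟨Q, hQ⟩ := exists_abs_le_mul_one_add_sq (hf.cont.sub hg.cont) hC2 fun t ht x => by
    rw [d2x_sub (hf.contDiff t ht) (hg.contDiff t ht)]
    exact (abs_sub _ _).trans (add_le_add (hKf t ht x) (hKg t ht x))
  intro t ht x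
  refine sub_nonpos.1 (le_zero_of_parabolic_subsolution (w := fun t x => f t x - g t x) hC
    (hf.cont.sub hg.cont) hC2 (fun t ht x => (le_abs_self _).trans (hQ t ht x))
    (fun t ht x => (hf.pde t ht x).sub (hg.pde t ht x)) (fun t ht x => ?_)
    (fun x => (sub_eq_zero.2 (hT x)).le) t ht x)
  rw [d2x_sub (hf.contDiff t ht) (hg.contDiff t ht)]
  linarith [hFbar t x (d2x g t x) (d2x f t x) (hgK t ht x) (hfK t ht x)]

end Hyp

end Standing

theorem uniqueness_classical_general (S : Standing) (hS : S.Hyp)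
    (KΦ εΦ : ℝ) (Φ : ℝ → ℝ) (K' ε' : ℝ) (u : ℝ → ℝ → ℝ)
    (hsol : Standing.SolHyp S KΦ εΦ Φ K' ε' u)
    (u' : ℝ → ℝ → ℝ)
    (hu'_cont : ContinuousOn (fun p : ℝ × ℝ => u' p.1 p.2) (Set.Icc 0 S.T ×ˢ Set.univ))
    (hu'_C2x : ∀ t ∈ Set.Ico (0 : ℝ) S.T, ContDiff ℝ 2 fun y => u' t y)
    (hu'xx_bdd : ∃ K : ℝ, ∀ t ∈ Set.Ico (0 : ℝ) S.T, ∀ x, |d2x u' t x| ≤ K)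
    (hu'_dom : ∃ ε'' ∈ Set.Ioc (0 : ℝ) S.eps0,
        ∀ t ∈ Set.Ico (0 : ℝ) S.T, ∀ x, (t, x, d2x u' t x) ∈ S.Deps ε'')
    (hu'_pde : ∀ t ∈ Set.Ico (0 : ℝ) S.T, ∀ x,
        HasDerivWithinAt (fun s => u' s x) (-(S.Fbar t x (d2x u' t x))) (Set.Ico 0 S.T) t)
    (hu'_T : ∀ x, u' S.T x = Φ x) :
    ∀ t ∈ Set.Icc (0 : ℝ) S.T, ∀ x : ℝ, u' t x = u t x := by
  have hu := hsol.isClassicalSolution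
  have hu' : S.IsClassicalSolution u' := ⟨hu'_cont, hu'_C2x, hu'xx_bdd, hu'_dom, hu'_pde⟩
  have hT : ∀ x, u' S.T x = u S.T x := fun x => (hu'_T x).trans (hsol.terminal x).symm
  exact fun t ht x => le_antisymm (hS.le_of_isClassicalSolution hu' hu hT t ht x)
    (hS.le_of_isClassicalSolution hu hu' (fun x => (hT x).symm) t ht x)

/-- **Proposition 3.6.d** (uniqueness of classical solutions).
Under the standing assumptions and the solution hypotheses, `u` is the unique solution of
`∂ₜu' + F̄(·,∂²ₓu') = 0`, `u'(T,·) = Φ`, in the class of continuous functions on `[0,T] × ℝ`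
that are `C^{1,2}` on `[0,T) × ℝ` with bounded `∂²ₓu'` and `(·,∂²ₓu') ∈ D_{ε''}` for some
`ε'' ∈ (0,ε₀]`. -/
theorem uniqueness_classical (S : Standing) (hS : S.Hyp)
    (KΦ εΦ : ℝ) (Φ : ℝ → ℝ) (K' ε' : ℝ) (u : ℝ → ℝ → ℝ)
    (hsol : Standing.SolHyp S KΦ εΦ Φ K' ε' u)
    (u' : ℝ → ℝ → ℝ)
    (hu'_cont : ContinuousOn (fun p : ℝ × ℝ => u' p.1 p.2) (Set.Icc 0 S.T ×ˢ Set.univ))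
    (hu'_C2x : ∀ t ∈ Set.Ico (0 : ℝ) S.T, ContDiff ℝ 2 fun y => u' t y)
    (hu'_derivs_cont : ∀ n : ℕ, n ≤ 2 → ContinuousOn
        (fun p : ℝ × ℝ => iteratedDeriv n (fun y => u' p.1 y) p.2)
        (Set.Ico 0 S.T ×ˢ Set.univ))
    (hu'xx_bdd : ∃ K : ℝ, ∀ t ∈ Set.Ico (0 : ℝ) S.T, ∀ x, |d2x u' t x| ≤ K)
    (hu'_dom : ∃ ε'' ∈ Set.Ioc (0 : ℝ) S.eps0,
        ∀ t ∈ Set.Ico (0 : ℝ) S.T, ∀ x, (t, x, d2x u' t x) ∈ S.Deps ε'')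
    (hu'_pde : ∀ t ∈ Set.Ico (0 : ℝ) S.T, ∀ x,
        HasDerivWithinAt (fun s => u' s x) (-(S.Fbar t x (d2x u' t x))) (Set.Ico 0 S.T) t)
    (hu'_T : ∀ x, u' S.T x = Φ x) :
    ∀ t ∈ Set.Icc (0 : ℝ) S.T, ∀ x : ℝ, u' t x = u t x :=
  uniqueness_classical_general S hS KΦ εΦ Φ K' ε' u hsol u' hu'_cont hu'_C2x hu'xx_bdd hu'_dom
    hu'_pde hu'_T
end
end

section
/- Face-lift characterization (Remark 3.4): Let g:ℝ→ℝ be uniformly continuous, let γ̄:ℝ→ℝ be uniformly continuous, and let Γ̄∈C²(ℝ) satisfy Γ̄''=γ̄ on ℝ. Assume the set H:={h∈C²(ℝ) : h(x)≥g(x) and h''(x)≤γ̄(x) for all x∈ℝ} is nonempty. Then for every x∈ℝ, inf{h(x) : h∈H} = (g−Γ̄)^conc(x) + Γ̄(x), where (g−Γ̄)^conc denotes the concave envelope of g−Γ̄, i.e. the pointwise infimum over all concave functions ℓ:ℝ→ℝ with ℓ≥g−Γ̄ on ℝ. -/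
/-!
Subtracting `Γ` turns the constraint `h'' ≤ γ` into concavity of `h - Γ`, so every `h ∈ H` gives
the concave majorant `h - Γ` of `g - Γ`. Conversely, a concave majorant `ℓ` of `g - Γ` lies below
its supporting line `a` at `x`, and `a + Γ ∈ H` takes the value `ℓ x + Γ x` at `x`. Hence the values
at `x` of the two families differ exactly by the translation by `Γ x`, and so do their infima.
-/

open Set

theorem ConcaveOn.exists_le_affine_of_mem_interior {S : Set ℝ} {f : ℝ → ℝ}
    (hf : ConcaveOn ℝ S f) {x : ℝ} (hx : x ∈ interior S) :
    ∃ m : ℝ, ∀ y ∈ S, f y ≤ f x + m * (y - x) := by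
  have hconv : ConvexOn ℝ S (-f) := hf.neg
  refine ⟨-derivWithin (-f) (Ioi x) x, fun y hy => ?_⟩
  rcases lt_trichotomy y x with hyx | rfl | hxy
  · have hslope := (hconv.slope_le_leftDeriv_of_mem_interior hy hx hyx).trans
      (hconv.leftDeriv_le_rightDeriv_of_mem_interior hx)
    rw [slope_def_field, div_le_iff₀ (sub_pos.2 hyx)] at hslope
    simp only [Pi.neg_apply] at hslope
    linarith
  · simp
  · have hslope := hconv.rightDeriv_le_slope_of_mem_interior hx hy hxy
    rw [slope_def_field, le_div_iff₀ (sub_pos.2 hxy)] at hslope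
    simp only [Pi.neg_apply] at hslope
    linarith

theorem concaveOn_univ_of_iteratedDeriv_two_nonpos {f : ℝ → ℝ} (hf : ContDiff ℝ 2 f)
    (hf'' : ∀ x, iteratedDeriv 2 f x ≤ 0) : ConcaveOn ℝ univ f := by
  refine concaveOn_univ_of_deriv2_nonpos (hf.differentiable two_ne_zero) ?_ ?_
  · exact (hf.deriv' (n := 1)).differentiable one_ne_zero
  · simpa only [iteratedDeriv_eq_iterate] using hf''

theorem iteratedDeriv_two_affine (c m x₀ : ℝ) :
    iteratedDeriv 2 (fun y : ℝ => c + m * (y - x₀)) = 0 := by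
  ext y
  simp [iteratedDeriv_succ]

theorem concaveOn_sub_of_iteratedDeriv_two_le {h Γ : ℝ → ℝ} (hh : ContDiff ℝ 2 h)
    (hΓ : ContDiff ℝ 2 Γ) (hle : ∀ x, iteratedDeriv 2 h x ≤ iteratedDeriv 2 Γ x) :
    ConcaveOn ℝ univ (h - Γ) :=
  concaveOn_univ_of_iteratedDeriv_two_nonpos (hh.sub hΓ) fun x => by
    rw [iteratedDeriv_sub hh.contDiffAt hΓ.contDiffAt]
    linarith [hle x]

theorem ConcaveOn.exists_contDiff_majorant_add {ℓ Γ : ℝ → ℝ} (hℓ : ConcaveOn ℝ univ ℓ)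
    (hΓ : ContDiff ℝ 2 Γ) (x : ℝ) :
    ∃ h : ℝ → ℝ, ContDiff ℝ 2 h ∧ ℓ + Γ ≤ h ∧ iteratedDeriv 2 h = iteratedDeriv 2 Γ ∧
      h x = ℓ x + Γ x := by
  obtain ⟨m, hm⟩ := hℓ.exists_le_affine_of_mem_interior (by simp : x ∈ interior univ)
  have haff : ContDiff ℝ 2 fun y : ℝ => ℓ x + m * (y - x) := by fun_prop
  refine ⟨fun y => ℓ x + m * (y - x) + Γ y, haff.add hΓ, fun y => ?_, ?_, by simp⟩
  · simpa using hm y (mem_univ y)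
  · ext y
    rw [iteratedDeriv_fun_add haff.contDiffAt hΓ.contDiffAt, iteratedDeriv_two_affine,
      Pi.zero_apply, zero_add]

theorem face_lift_characterization_general
    (g γ Γ : ℝ → ℝ)
    (hΓ : ContDiff ℝ 2 Γ) (hΓ'' : ∀ x : ℝ, iteratedDeriv 2 Γ x = γ x)
    (hne : ∃ h : ℝ → ℝ, ContDiff ℝ 2 h ∧ (∀ x : ℝ, g x ≤ h x) ∧
      ∀ x : ℝ, iteratedDeriv 2 h x ≤ γ x) :
    ∀ x : ℝ,
      sInf {v : ℝ | ∃ h : ℝ → ℝ, ContDiff ℝ 2 h ∧ (∀ y : ℝ, g y ≤ h y) ∧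
          (∀ y : ℝ, iteratedDeriv 2 h y ≤ γ y) ∧ v = h x}
        =
      sInf {v : ℝ | ∃ ℓ : ℝ → ℝ, ConcaveOn ℝ Set.univ ℓ ∧
          (∀ y : ℝ, g y - Γ y ≤ ℓ y) ∧ v = ℓ x}
        + Γ x := by
  intro x
  set R := {v : ℝ | ∃ ℓ : ℝ → ℝ, ConcaveOn ℝ Set.univ ℓ ∧ (∀ y : ℝ, g y - Γ y ≤ ℓ y) ∧ v = ℓ x}
  have hH : {v : ℝ | ∃ h : ℝ → ℝ, ContDiff ℝ 2 h ∧ (∀ y : ℝ, g y ≤ h y) ∧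
      (∀ y : ℝ, iteratedDeriv 2 h y ≤ γ y) ∧ v = h x} = OrderIso.addRight (Γ x) '' R := by
    ext v
    constructor
    · rintro ⟨h, hh, hgh, hh'', rfl⟩
      refine ⟨h x - Γ x, ⟨h - Γ, ?_, fun y => sub_le_sub_right (hgh y) _, rfl⟩, sub_add_cancel _ _⟩
      exact concaveOn_sub_of_iteratedDeriv_two_le hh hΓ fun y => (hh'' y).trans_eq (hΓ'' y).symm
    · rintro ⟨_, ⟨ℓ, hℓ, hgℓ, rfl⟩, rfl⟩
      obtain ⟨h, hh, hℓh, hh'', hhx⟩ := hℓ.exists_contDiff_majorant_add hΓ x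
      refine ⟨h, hh, fun y => ?_, fun y => (congrFun hh'' y).trans_le (hΓ'' y).le, hhx.symm⟩
      linarith [hgℓ y, hℓh y, Pi.add_apply ℓ Γ y]
  have hRne : R.Nonempty := by
    obtain ⟨h₀, hh₀, hgh₀, hh₀''⟩ := hne
    have hmem : h₀ x ∈ OrderIso.addRight (Γ x) '' R := hH ▸ ⟨h₀, hh₀, hgh₀, hh₀'', rfl⟩
    exact (nonempty_of_mem hmem).of_image
  have hRbdd : BddBelow R := ⟨g x - Γ x, by rintro _ ⟨ℓ, -, hgℓ, rfl⟩; exact hgℓ x⟩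
  rw [hH, ← (OrderIso.addRight (Γ x)).map_csInf' hRne hRbdd]
  rfl

/-- **Remark 3.4** (face-lift characterization).
Let `g, γ̄ : ℝ → ℝ` be uniformly continuous and let `Γ̄ ∈ C²(ℝ)` with `Γ̄'' = γ̄`. If the
set `H = {h ∈ C²(ℝ) : h ≥ g, h'' ≤ γ̄}` is nonempty, then for every `x`,
`inf{h(x) : h ∈ H} = (g − Γ̄)^conc(x) + Γ̄(x)`, where `(g − Γ̄)^conc` is the concave
envelope, i.e. the pointwise infimum of all concave majorants of `g − Γ̄`. -/
theorem face_lift_characterization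
    (g γ Γ : ℝ → ℝ)
    (hg : UniformContinuous g) (hγ : UniformContinuous γ)
    (hΓ : ContDiff ℝ 2 Γ) (hΓ'' : ∀ x : ℝ, iteratedDeriv 2 Γ x = γ x)
    (hne : ∃ h : ℝ → ℝ, ContDiff ℝ 2 h ∧ (∀ x : ℝ, g x ≤ h x) ∧
      ∀ x : ℝ, iteratedDeriv 2 h x ≤ γ x) :
    ∀ x : ℝ,
      sInf {v : ℝ | ∃ h : ℝ → ℝ, ContDiff ℝ 2 h ∧ (∀ y : ℝ, g y ≤ h y) ∧
          (∀ y : ℝ, iteratedDeriv 2 h y ≤ γ y) ∧ v = h x}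
        =
      sInf {v : ℝ | ∃ ℓ : ℝ → ℝ, ConcaveOn ℝ Set.univ ℓ ∧
          (∀ y : ℝ, g y - Γ y ≤ ℓ y) ∧ v = ℓ x}
        + Γ x :=
  face_lift_characterization_general g γ Γ hΓ hΓ'' hne
end
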